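/- arXiv:math/0006176 — 3 statements merged into one kernel-verified Lean document; each statement's English description precedes it below -/
import Mathlib

section
/- For every odd characteristic a and every τ ∈ ℌ_g, one has ∑_{b∈𝔎₊} (−1)^{a′ᵀb″} θ_{a+b}(τ)² θ_b(τ)² = 0. -/
open Complex BigOperators Finset

noncomputable section

/-- The Siegel upper half space of degree `g`: complex symmetric `g × g` matrices
whose imaginary part is positive definite. -/
def SiegelHalf (g : ℕ) : Set (Matrix (Fin g) (Fin g) ℂ) :=
  {τ | τ.IsSymm ∧ (Matrix.of fun i j => (τ i j).im).PosDef}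

/-- A theta characteristic `a = (a′, a″)` with `a′, a″ ∈ {0,1}^g`. -/
abbrev ThetaChar (g : ℕ) := (Fin g → Fin 2) × (Fin g → Fin 2)

/-- Componentwise sum of characteristics, modulo 2. -/
def charAdd {g : ℕ} (a b : ThetaChar g) : ThetaChar g := (a.1 + b.1, a.2 + b.2)

/-- `|a| = a′ᵀ a″`. -/
def charAbs {g : ℕ} (a : ThetaChar g) : ℕ := ∑ i, (a.1 i).val * (a.2 i).val

/-- A characteristic is even if `|a|` is even. -/
def IsEvenChar {g : ℕ} (a : ThetaChar g) : Prop := Even (charAbs a)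

instance {g : ℕ} : DecidablePred (IsEvenChar (g := g)) := fun a =>
  decidable_of_iff (charAbs a % 2 = 0) Nat.even_iff.symm

/-- `⟨a,b⟩ = a′ᵀ b″ − b′ᵀ a″`. -/
def charPair {g : ℕ} (a b : ThetaChar g) : ℤ :=
  (∑ i, ((a.1 i).val : ℤ) * ((b.2 i).val : ℤ))
    - ∑ i, ((b.1 i).val : ℤ) * ((a.2 i).val : ℤ)

/-- The vector `n + a′/2 ∈ ℂ^g`. -/
def thetaVec {g : ℕ} (a : ThetaChar g) (n : Fin g → ℤ) (i : Fin g) : ℂ :=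
  (n i : ℂ) + ((a.1 i).val : ℂ) / 2

/-- The `n`-th term of the theta series with characteristic `a`. -/
def thetaTerm {g : ℕ} (a : ThetaChar g) (z : Fin g → ℂ)
    (τ : Matrix (Fin g) (Fin g) ℂ) (n : Fin g → ℤ) : ℂ :=
  Complex.exp ((Real.pi : ℂ) * Complex.I *
      (∑ i, ∑ j, thetaVec a n i * τ i j * thetaVec a n j)
    + 2 * (Real.pi : ℂ) * Complex.I *
      (∑ i, thetaVec a n i * (z i + ((a.2 i).val : ℂ) / 2)))

/-- The theta function `θ_a(z, τ)`. -/
def Theta {g : ℕ} (a : ThetaChar g) (z : Fin g → ℂ)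
    (τ : Matrix (Fin g) (Fin g) ℂ) : ℂ :=
  ∑' n : Fin g → ℤ, thetaTerm a z τ n

/-- The thetanull `θ_a(τ) = θ_a(0, τ)`. -/
def Thetanull {g : ℕ} (a : ThetaChar g) (τ : Matrix (Fin g) (Fin g) ℂ) : ℂ :=
  Theta a 0 τ

/-- The derivation `δ_{jl}` acting on functions of `τ ∈ ℌ_g`. -/
def delta {g : ℕ} (j l : Fin g) (f : Matrix (Fin g) (Fin g) ℂ → ℂ)
    (τ : Matrix (Fin g) (Fin g) ℂ) : ℂ :=
  if j = l then
    (1 / ((Real.pi : ℂ) * Complex.I)) *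
      deriv (fun t : ℂ => f (τ + t • Matrix.single j j 1)) 0
  else
    (1 / (2 * (Real.pi : ℂ) * Complex.I)) *
      deriv (fun t : ℂ =>
        f (τ + t • (Matrix.single j l 1 + Matrix.single l j 1))) 0

/-- `ψ_{a,jl} = δ_{jl} θ_a / θ_a`. -/
def psi {g : ℕ} (a : ThetaChar g) (j l : Fin g)
    (τ : Matrix (Fin g) (Fin g) ℂ) : ℂ :=
  delta j l (Thetanull a) τ / Thetanull a τ

/-- The quadratic form `ψ_a(u) = ∑_{j,l} ψ_{a,jl} u_j u_l`. -/
def psiQuad {g : ℕ} (a : ThetaChar g) (u : Fin g → ℂ)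
    (τ : Matrix (Fin g) (Fin g) ℂ) : ℂ :=
  ∑ j, ∑ l, psi a j l τ * u j * u l

/-- `∂θ_a/∂z_j (0, τ)`. -/
def thetaZDeriv {g : ℕ} (a : ThetaChar g) (j : Fin g)
    (τ : Matrix (Fin g) (Fin g) ℂ) : ℂ :=
  deriv (fun t : ℂ => Theta a (fun i => if i = j then t else 0) τ) 0

/-! The substitution `n ↦ -n - b′` negates `n + b′/2`, which gives `θ_b(-z) = (-1)^|b| θ_b(z)`;
hence odd thetanulls vanish and the sum may run over all characteristics. The involution
`b ↦ a + b` then pairs each term with its negative, since `a′ᵀb″ + a′ᵀ(a″ + b″) ≡ |a|` is odd. -/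

lemma charAdd_involutive {g : ℕ} (a : ThetaChar g) : Function.Involutive (charAdd a) := by
  have : ∀ x y : Fin 2, x + (x + y) = y := by decide
  intro b
  exact Prod.ext (funext fun i => this _ _) (funext fun i => this _ _)

lemma charAdd_ne_self {g : ℕ} {a : ThetaChar g} (ha : Odd (charAbs a)) (b : ThetaChar g) :
    charAdd a b ≠ b := by
  intro h
  have ha₁ : a.1 = 0 := add_eq_right.mp (congrArg Prod.fst h)
  simp [charAbs, ha₁] at ha

lemma sum_mul_charAdd_snd_mod_two {g : ℕ} (a b : ThetaChar g) :
    (∑ i, (a.1 i).val * ((charAdd a b).2 i).val) % 2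
      = (charAbs a + ∑ i, (a.1 i).val * (b.2 i).val) % 2 := by
  have : ∀ x y z : Fin 2, x.val * (y + z).val % 2 = (x.val * y.val + x.val * z.val) % 2 := by
    decide
  rw [charAbs, ← sum_add_distrib, sum_nat_mod, sum_nat_mod _ _ (fun i => _ + _)]
  exact congrArg (· % 2) (sum_congr rfl fun i _ => this _ _ _)

lemma neg_one_pow_sum_mul_charAdd_snd {R : Type*} [Ring R] {g : ℕ} {a : ThetaChar g}
    (ha : Odd (charAbs a)) (b : ThetaChar g) :
    (-1 : R) ^ (∑ i, (a.1 i).val * ((charAdd a b).2 i).val)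
      = -(-1) ^ (∑ i, (a.1 i).val * (b.2 i).val) := by
  rw [neg_one_pow_eq_pow_mod_two, sum_mul_charAdd_snd_mod_two, ← neg_one_pow_eq_pow_mod_two,
    pow_add, ha.neg_one_pow, neg_one_mul]

lemma sum_neg_one_pow_mul_charAdd_pow_mul_pow {R : Type*} [CommRing R] {g : ℕ}
    {a : ThetaChar g} (ha : Odd (charAbs a)) (θ : ThetaChar g → R) (k : ℕ) :
    ∑ b, (-1 : R) ^ (∑ i, (a.1 i).val * (b.2 i).val) * θ (charAdd a b) ^ k * θ b ^ k = 0 := by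
  refine sum_ninvolution (charAdd a) (fun b => ?_) (fun b _ => charAdd_ne_self ha b)
    (fun _ => mem_univ _) (charAdd_involutive a)
  rw [charAdd_involutive a b, neg_one_pow_sum_mul_charAdd_snd ha]
  ring

lemma thetaTerm_neg {g : ℕ} (b : ThetaChar g) (z : Fin g → ℂ)
    (τ : Matrix (Fin g) (Fin g) ℂ) (n : Fin g → ℤ) :
    thetaTerm b (-z) τ (-n - fun i => ((b.1 i).val : ℤ))
      = (-1) ^ charAbs b * thetaTerm b z τ n := by
  have hv : ∀ i, thetaVec b (-n - fun i => ((b.1 i).val : ℤ)) i = -thetaVec b n i := fun i => by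
    simp only [thetaVec, Pi.sub_apply, Pi.neg_apply]
    push_cast
    ring
  have hlin : ∑ i, -(thetaVec b n i * (-z i + ((b.2 i).val : ℂ) / 2))
      = ∑ i, thetaVec b n i * (z i + ((b.2 i).val : ℂ) / 2)
        - ∑ i, ((n i : ℂ) * (b.2 i).val + ((b.1 i).val * (b.2 i).val : ℕ) / 2) := by
    rw [← sum_sub_distrib]
    exact sum_congr rfl fun i _ => by simp only [thetaVec]; push_cast; ring
  rw [← Complex.exp_pi_mul_I, ← Complex.exp_nat_mul,
    ← mul_one (Complex.exp (charAbs b * (Real.pi * I))),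
    ← Complex.exp_int_mul_two_pi_mul_I (-∑ i, n i * (b.2 i).val - charAbs b),
    thetaTerm, thetaTerm, ← Complex.exp_add, ← Complex.exp_add]
  congr 1
  simp only [hv, Pi.neg_apply, neg_mul, mul_neg, neg_neg]
  rw [hlin, sum_add_distrib, ← sum_div]
  push_cast [charAbs]
  ring

lemma Theta_neg {g : ℕ} (b : ThetaChar g) (z : Fin g → ℂ) (τ : Matrix (Fin g) (Fin g) ℂ) :
    Theta b (-z) τ = (-1) ^ charAbs b * Theta b z τ := by
  let σ : (Fin g → ℤ) ≃ (Fin g → ℤ) :=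
    (Equiv.neg _).trans (Equiv.subRight fun i => ((b.1 i).val : ℤ))
  rw [Theta, ← σ.tsum_eq, Theta, ← tsum_mul_left]
  exact tsum_congr fun n => thetaTerm_neg b z τ n

lemma Thetanull_eq_zero_of_odd {g : ℕ} {b : ThetaChar g} (hb : Odd (charAbs b))
    (τ : Matrix (Fin g) (Fin g) ℂ) : Thetanull b τ = 0 := by
  have h := Theta_neg b 0 τ
  rw [neg_zero, hb.neg_one_pow, neg_one_mul, eq_neg_iff_add_eq_zero] at h
  exact add_self_eq_zero.mp h

theorem odd_char_theta_sum_vanishes_general (g : ℕ)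
    (a : ThetaChar g) (ha : ¬ IsEvenChar a)
    (τ : Matrix (Fin g) (Fin g) ℂ) :
    ∑ b ∈ Finset.univ.filter (IsEvenChar (g := g)),
        (-1 : ℂ) ^ (∑ i, (a.1 i).val * (b.2 i).val) *
          Thetanull (charAdd a b) τ ^ 2 * Thetanull b τ ^ 2 = 0 := by
  rw [sum_filter_of_ne fun b _ hb => ?_]
  · exact sum_neg_one_pow_mul_charAdd_pow_mul_pow (Nat.not_even_iff_odd.mp ha) (Thetanull · τ) 2
  · by_contra hb_odd
    rw [Thetanull_eq_zero_of_odd (Nat.not_even_iff_odd.mp hb_odd)] at hb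
    simp at hb

/-- for odd `a`, `∑_{b ∈ 𝔎₊} (−1)^{a′ᵀb″} θ_{a+b}² θ_b² = 0`. -/
theorem odd_char_theta_sum_vanishes (g : ℕ) (hg : 1 ≤ g)
    (a : ThetaChar g) (ha : ¬ IsEvenChar a)
    (τ : Matrix (Fin g) (Fin g) ℂ) (hτ : τ ∈ SiegelHalf g) :
    ∑ b ∈ Finset.univ.filter (IsEvenChar (g := g)),
        (-1 : ℂ) ^ (∑ i, (a.1 i).val * (b.2 i).val) *
          Thetanull (charAdd a b) τ ^ 2 * Thetanull b τ ^ 2 = 0 :=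
  odd_char_theta_sum_vanishes_general g a ha τ
end
end

section
/- Let γ = (A B; C D) be a 2g×2g integer symplectic matrix written in g×g blocks, let τ ∈ ℌ_g, suppose that Cτ+D is invertible and that γ·τ := (Aτ+B)(Cτ+D)^{−1} lies in ℌ_g for every τ ∈ ℌ_g, and let f : ℌ_g → ℂ be a holomorphic function satisfying f(γ·σ) = f(σ) for all σ ∈ ℌ_g. Then, for every τ ∈ ℌ_g, the symmetric matrix δf := (δ_{jl}f)_{1≤j,l≤g} satisfies (δf)(γ·τ) = (Cτ+D)·(δf)(τ)·(Cτ+D)ᵀ. -/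
open Complex BigOperators Finset Matrix

noncomputable section

attribute [local instance] Matrix.normedAddCommGroup Matrix.normedSpace

/-! Differentiating the invariance `f (γ·σ) = f σ` along the lines `σ = τ + t E`, `E` symmetric
(which stay in `ℌ_g` for small complex `t`), and using the identity
`γ·σ' - γ·σ = (Cσ' + D)⁻ᵀ (σ' - σ) (Cσ + D)⁻¹`, valid for symplectic `γ` and symmetric `σ'`,
shows that the derivative of `f` at `τ` in the direction `E` equals its derivative at `γ·τ` in the
direction `(Cτ + D)⁻ᵀ E (Cτ + D)⁻¹`. On symmetric directions the derivative of `f` is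
`E ↦ πi · tr (δf · E)`, and a symmetric matrix is determined by its traces against symmetric
matrices; hence `δf(τ) = (Cτ + D)⁻¹ δf(γ·τ) (Cτ + D)⁻ᵀ`. -/

open Filter Topology

theorem Matrix.PosDef.eventually_of_continuousAt {X n : Type*} [TopologicalSpace X] [Fintype n]
    {F : X → Matrix n n ℝ} {x₀ : X} (hx₀ : (F x₀).PosDef) (hF : ContinuousAt F x₀)
    (hherm : ∀ x, (F x).IsHermitian) : ∀ᶠ x in 𝓝 x₀, (F x).PosDef := by
  have hsphere : ∀ y ∈ Metric.sphere (0 : n → ℝ) 1,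
      ∀ᶠ z : X × (n → ℝ) in 𝓝 (x₀, y), 0 < z.2 ⬝ᵥ (F z.1 *ᵥ z.2) := by
    intro y hy
    have hquad : Continuous fun p : Matrix n n ℝ × (n → ℝ) => p.2 ⬝ᵥ (p.1 *ᵥ p.2) :=
      continuous_snd.dotProduct (continuous_fst.matrix_mulVec continuous_snd)
    have hcont : ContinuousAt (fun z : X × (n → ℝ) => z.2 ⬝ᵥ (F z.1 *ᵥ z.2)) (x₀, y) :=
      hquad.continuousAt.comp ((hF.comp continuousAt_fst).prodMk continuousAt_snd)
    refine hcont.eventually (lt_mem_nhds ?_)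
    simpa using hx₀.dotProduct_mulVec_pos (ne_zero_of_mem_unit_sphere ⟨y, hy⟩)
  -- Positivity on the compact unit sphere persists near `x₀` (tube lemma), and spreads to all
  -- nonzero vectors by homogeneity.
  filter_upwards [(isCompact_sphere (0 : n → ℝ) 1).eventually_forall_of_forall_eventually
      (P := fun x y => 0 < y ⬝ᵥ (F x *ᵥ y)) hsphere] with x hx
  refine .of_dotProduct_mulVec_pos (hherm x) fun v hv => ?_
  have hv' : 0 < ‖v‖ := norm_pos_iff.mpr hv
  have hu := hx (‖v‖⁻¹ • v) (by simp [norm_smul, hv'.ne'])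
  rw [mulVec_smul, dotProduct_smul, smul_dotProduct, smul_eq_mul, smul_eq_mul, ← mul_assoc] at hu
  simpa using pos_of_mul_pos_right hu (by positivity)

theorem isSymm_single_add_single {n α : Type*} [DecidableEq n] [AddCommMonoid α] (j l : n)
    (a : α) : (single j l a + single l j a).IsSymm := by
  rw [IsSymm, transpose_add, transpose_single, transpose_single, add_comm]

theorem Matrix.IsSymm.ext_of_trace_mul_eq {n K : Type*} [Fintype n] [DecidableEq n] [Field K]
    [NeZero (2 : K)] {X Y : Matrix n n K} (hX : X.IsSymm) (hY : Y.IsSymm)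
    (h : ∀ E : Matrix n n K, E.IsSymm → (X * E).trace = (Y * E).trace) : X = Y := by
  ext j l
  have hjl := h _ (isSymm_single_add_single j l 1)
  simp only [Matrix.mul_add, trace_add, trace_mul_single, MulOpposite.op_one, one_smul,
    hX.apply, hY.apply] at hjl
  rw [← two_mul, ← two_mul] at hjl
  exact mul_left_cancel₀ two_ne_zero hjl

theorem hasDerivAt_of_eventually_sub_eq_smul {𝕜 F : Type*} [NontriviallyNormedField 𝕜]
    [NormedAddCommGroup F] [NormedSpace 𝕜 F] {f H : 𝕜 → F} {x : 𝕜} (hH : ContinuousAt H x)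
    (hf : ∀ᶠ t in 𝓝 x, f t - f x = (t - x) • H t) : HasDerivAt f (H x) x := by
  rw [hasDerivAt_iff_tendsto_slope]
  refine (hH.tendsto.mono_left nhdsWithin_le_nhds).congr' ?_
  filter_upwards [nhdsWithin_le_nhds hf, self_mem_nhdsWithin] with t ht hne
  rw [slope_def_module, ht, inv_smul_smul₀ (sub_ne_zero.mpr hne)]

section Symplectic

variable {n R : Type*} [Fintype n] [DecidableEq n] [CommRing R] {A B C D : Matrix n n R}

theorem symplectic_block_relations
    (h : (fromBlocks A B C D)ᵀ * fromBlocks 0 1 (-1) 0 * fromBlocks A B C D =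
      fromBlocks 0 1 (-1) 0) :
    Aᵀ * C = Cᵀ * A ∧ Aᵀ * D - Cᵀ * B = 1 ∧ Bᵀ * D = Dᵀ * B := by
  simp only [fromBlocks_transpose, fromBlocks_multiply, Matrix.mul_zero, Matrix.mul_one,
    Matrix.mul_neg, Matrix.neg_mul, add_zero, zero_add] at h
  obtain ⟨h11, h12, -, h22⟩ := fromBlocks_inj.mp h
  refine ⟨?_, ?_, ?_⟩
  · rwa [neg_add_eq_zero, eq_comm] at h11
  · rwa [neg_add_eq_sub] at h12
  · rwa [neg_add_eq_zero, eq_comm] at h22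

def mobius (A B C D σ : Matrix n n R) : Matrix n n R := (A * σ + B) * (C * σ + D)⁻¹

theorem transpose_mul_sub_transpose_mul_eq_sub (hAC : Aᵀ * C = Cᵀ * A)
    (hAD : Aᵀ * D - Cᵀ * B = 1) (hBD : Bᵀ * D = Dᵀ * B) {σ σ' : Matrix n n R}
    (hσ' : σ'.IsSymm) :
    (C * σ' + D)ᵀ * (A * σ + B) - (A * σ' + B)ᵀ * (C * σ + D) = σ - σ' := by
  have hDA : Dᵀ * A - Bᵀ * C = 1 := by
    simpa [transpose_sub, transpose_mul] using congrArg transpose hAD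
  calc (C * σ' + D)ᵀ * (A * σ + B) - (A * σ' + B)ᵀ * (C * σ + D)
      = σ' * (Cᵀ * A - Aᵀ * C) * σ - σ' * (Aᵀ * D - Cᵀ * B) + (Dᵀ * A - Bᵀ * C) * σ
          + (Dᵀ * B - Bᵀ * D) := by
        simp only [transpose_add, transpose_mul, hσ'.eq]
        noncomm_ring
    _ = σ - σ' := by
        rw [hAC, hAD, hDA, hBD, sub_self, sub_self]
        noncomm_ring

theorem mobius_sub_mobius (hAC : Aᵀ * C = Cᵀ * A) (hAD : Aᵀ * D - Cᵀ * B = 1)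
    (hBD : Bᵀ * D = Dᵀ * B) {σ σ' : Matrix n n R} (hσ' : σ'.IsSymm)
    (hM : IsUnit (C * σ + D).det) (hM' : IsUnit (C * σ' + D).det) :
    mobius A B C D σ' - mobius A B C D σ = (C * σ' + D)⁻¹ᵀ * (σ' - σ) * (C * σ + D)⁻¹ := by
  set M := C * σ + D
  set M' := C * σ' + D
  set N := A * σ + B
  set N' := A * σ' + B
  have hMt' : IsUnit M'ᵀ.det := by rwa [det_transpose]
  have hsymm : M'ᵀ⁻¹ * N'ᵀ = N' * M'⁻¹ := by
    have h0 : N'ᵀ * M' = M'ᵀ * N' := by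
      have h := transpose_mul_sub_transpose_mul_eq_sub hAC hAD hBD (σ := σ') hσ'
      rw [sub_self, sub_eq_zero] at h
      exact h.symm
    calc M'ᵀ⁻¹ * N'ᵀ = M'ᵀ⁻¹ * (N'ᵀ * M') * M'⁻¹ := by
          rw [Matrix.mul_assoc, Matrix.mul_assoc, mul_nonsing_inv _ hM', Matrix.mul_one]
      _ = N' * M'⁻¹ := by
          rw [h0, ← Matrix.mul_assoc, nonsing_inv_mul _ hMt', Matrix.one_mul]
  calc mobius A B C D σ' - mobius A B C D σ
        = M'ᵀ⁻¹ * N'ᵀ * (M * M⁻¹) - M'ᵀ⁻¹ * M'ᵀ * (N * M⁻¹) := by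
        rw [hsymm, mul_nonsing_inv _ hM, nonsing_inv_mul _ hMt', Matrix.mul_one, Matrix.one_mul]
        rfl
    _ = M'ᵀ⁻¹ * -(M'ᵀ * N - N'ᵀ * M) * M⁻¹ := by noncomm_ring
    _ = M'⁻¹ᵀ * (σ' - σ) * M⁻¹ := by
        rw [transpose_mul_sub_transpose_mul_eq_sub hAC hAD hBD hσ', neg_sub,
          transpose_nonsing_inv]

end Symplectic

theorem hasDerivAt_mobius_add_smul {n : Type*} [Fintype n] [DecidableEq n]
    {A B C D τ E : Matrix n n ℂ} (hAC : Aᵀ * C = Cᵀ * A) (hAD : Aᵀ * D - Cᵀ * B = 1)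
    (hBD : Bᵀ * D = Dᵀ * B) (hτ : τ.IsSymm) (hE : E.IsSymm) (hM : IsUnit (C * τ + D).det) :
    HasDerivAt (fun t : ℂ => mobius A B C D (τ + t • E))
      ((C * τ + D)⁻¹ᵀ * E * (C * τ + D)⁻¹) 0 := by
  have hdenom : Continuous fun t : ℂ => C * (τ + t • E) + D := by fun_prop
  have hinv : ContinuousAt (fun t : ℂ => (C * (τ + t • E) + D)⁻¹) 0 := by
    refine ContinuousAt.comp (continuousAt_matrix_inv _ ?_) hdenom.continuousAt
    simpa using NormedRing.inverse_continuousAt hM.unit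
  have hunit : ∀ᶠ t : ℂ in 𝓝 0, IsUnit (C * (τ + t • E) + D).det := by
    simp_rw [isUnit_iff_ne_zero] at hM ⊢
    exact hdenom.matrix_det.continuousAt.eventually_ne (by simpa using hM)
  -- By `mobius_sub_mobius` the difference quotient is `(C(τ + tE) + D)⁻ᵀ E (Cτ + D)⁻¹`,
  -- which is continuous in `t`.
  refine (hasDerivAt_of_eventually_sub_eq_smul
    (H := fun t : ℂ => (C * (τ + t • E) + D)⁻¹ᵀ * E * (C * τ + D)⁻¹)
    (((continuous_id.matrix_transpose.matrix_mul continuous_const).matrix_mul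
      continuous_const).continuousAt.comp hinv) ?_).congr_deriv (by simp)
  filter_upwards [hunit] with t ht
  rw [zero_smul, add_zero, mobius_sub_mobius hAC hAD hBD (hτ.add (hE.smul t)) hM ht,
    add_sub_cancel_left, sub_zero, Matrix.mul_smul, Matrix.smul_mul]

theorem delta_comm {g : ℕ} (j l : Fin g) (f : Matrix (Fin g) (Fin g) ℂ → ℂ)
    (τ : Matrix (Fin g) (Fin g) ℂ) : delta j l f τ = delta l j f τ := by
  unfold delta
  by_cases h : j = l
  · subst h; rfl
  · rw [if_neg h, if_neg (Ne.symm h), add_comm]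

def deltaMatrix {g : ℕ} (f : Matrix (Fin g) (Fin g) ℂ → ℂ) (τ : Matrix (Fin g) (Fin g) ℂ) :
    Matrix (Fin g) (Fin g) ℂ :=
  of fun j l => delta j l f τ

theorem deltaMatrix_isSymm {g : ℕ} (f : Matrix (Fin g) (Fin g) ℂ → ℂ)
    (τ : Matrix (Fin g) (Fin g) ℂ) : (deltaMatrix f τ).IsSymm :=
  IsSymm.ext fun j l => delta_comm l j f τ

section Siegel

variable {g : ℕ} {f : Matrix (Fin g) (Fin g) ℂ → ℂ} {A B C D τ E : Matrix (Fin g) (Fin g) ℂ}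

theorem eventually_add_smul_mem_siegelHalf (hτ : τ ∈ SiegelHalf g) (hE : E.IsSymm) :
    ∀ᶠ t : ℂ in 𝓝 0, τ + t • E ∈ SiegelHalf g := by
  have hsymm : ∀ t : ℂ, (τ + t • E).IsSymm := fun t => hτ.1.add (hE.smul t)
  have hcont : Continuous fun t : ℂ => of fun i j => ((τ + t • E) i j).im := by
    refine continuous_pi fun i => continuous_pi fun j => ?_
    simp only [of_apply, Matrix.add_apply, Matrix.smul_apply, smul_eq_mul]
    fun_prop
  have hpos := Matrix.PosDef.eventually_of_continuousAt
    (F := fun t : ℂ => of fun i j => ((τ + t • E) i j).im) (x₀ := 0) (by simpa using hτ.2)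
    hcont.continuousAt fun t => IsHermitian.ext fun i j => by
      simp only [of_apply, star_trivial]
      rw [(hsymm t).apply i j]
  filter_upwards [hpos] with t ht using ⟨hsymm t, ht⟩

theorem DifferentiableOn.hasDerivAt_comp_add_smul (hf : DifferentiableOn ℂ f (SiegelHalf g))
    (hτ : τ ∈ SiegelHalf g) (hE : E.IsSymm) :
    HasDerivAt (fun t : ℂ => f (τ + t • E)) (fderivWithin ℂ f (SiegelHalf g) τ E) 0 := by
  have hline : HasDerivAt (fun t : ℂ => τ + t • E) E 0 :=
    (((hasDerivAt_id (0 : ℂ)).smul_const E).const_add τ).congr_deriv (one_smul ℂ E)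
  exact (hf τ hτ).hasFDerivWithinAt.comp_hasDerivAt_of_eq 0 hline
    (eventually_add_smul_mem_siegelHalf hτ hE) (by simp)

theorem fderivWithin_single_add_single (hf : DifferentiableOn ℂ f (SiegelHalf g))
    (hτ : τ ∈ SiegelHalf g) (j l : Fin g) :
    fderivWithin ℂ f (SiegelHalf g) τ (single j l 1 + single l j 1) =
      2 * Real.pi * I * delta j l f τ := by
  have hπ : (Real.pi : ℂ) * I ≠ 0 := by simp [Real.pi_ne_zero]
  unfold delta
  split_ifs with h
  · subst h
    have hjj : (single j j (1 : ℂ)).IsSymm := by rw [IsSymm, transpose_single]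
    rw [(hf.hasDerivAt_comp_add_smul hτ hjj).deriv, map_add]
    field_simp
    ring
  · rw [(hf.hasDerivAt_comp_add_smul hτ (isSymm_single_add_single j l 1)).deriv]
    field_simp

theorem fderivWithin_eq_trace_deltaMatrix_mul (hf : DifferentiableOn ℂ f (SiegelHalf g))
    (hτ : τ ∈ SiegelHalf g) {W : Matrix (Fin g) (Fin g) ℂ} (hW : W.IsSymm) :
    fderivWithin ℂ f (SiegelHalf g) τ W = Real.pi * I * (deltaMatrix f τ * W).trace := by
  have h2W : (2 : ℂ) • W = ∑ p, ∑ q, W p q • (single p q 1 + single q p 1) := by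
    have hWt := matrix_eq_sum_single Wᵀ
    conv_lhs at hWt => rw [hW.eq]
    simp only [smul_add, smul_single, smul_eq_mul, mul_one, Finset.sum_add_distrib, two_smul]
    rw [Finset.sum_comm (f := fun p q => single q p (W p q))]
    exact congrArg₂ (· + ·) (matrix_eq_sum_single W) hWt
  have htrace : (deltaMatrix f τ * W).trace = ∑ p, ∑ q, W p q * delta p q f τ := by
    simp only [trace, Matrix.diag, mul_apply, deltaMatrix, of_apply, hW.apply, mul_comm]
  apply mul_left_cancel₀ (two_ne_zero (α := ℂ))
  rw [← smul_eq_mul, ← map_smul, h2W, htrace]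
  simp only [map_sum, map_smul, fderivWithin_single_add_single hf hτ, smul_eq_mul,
    Finset.mul_sum]
  refine Finset.sum_congr rfl fun p _ => Finset.sum_congr rfl fun q _ => ?_
  ring

theorem fderivWithin_mobius_transpose_mul_mul (hAC : Aᵀ * C = Cᵀ * A)
    (hAD : Aᵀ * D - Cᵀ * B = 1) (hBD : Bᵀ * D = Dᵀ * B)
    (hf : DifferentiableOn ℂ f (SiegelHalf g)) (hτ : τ ∈ SiegelHalf g)
    (hM : IsUnit (C * τ + D).det) (hact : ∀ σ ∈ SiegelHalf g, mobius A B C D σ ∈ SiegelHalf g)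
    (hinvf : ∀ σ ∈ SiegelHalf g, f (mobius A B C D σ) = f σ) (hE : E.IsSymm) :
    fderivWithin ℂ f (SiegelHalf g) (mobius A B C D τ) ((C * τ + D)⁻¹ᵀ * E * (C * τ + D)⁻¹) =
      fderivWithin ℂ f (SiegelHalf g) τ E := by
  have hline := eventually_add_smul_mem_siegelHalf hτ hE
  have hcomp : HasDerivAt (fun t : ℂ => f (mobius A B C D (τ + t • E)))
      (fderivWithin ℂ f (SiegelHalf g) (mobius A B C D τ)
        ((C * τ + D)⁻¹ᵀ * E * (C * τ + D)⁻¹)) 0 :=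
    (hf _ (hact τ hτ)).hasFDerivWithinAt.comp_hasDerivAt_of_eq 0
      (hasDerivAt_mobius_add_smul hAC hAD hBD hτ.1 hE hM)
      (hline.mono fun t ht => hact _ ht) (by simp)
  refine hcomp.unique ((hf.hasDerivAt_comp_add_smul hτ hE).congr_of_eventuallyEq ?_)
  filter_upwards [hline] with t ht using hinvf _ ht

theorem deltaMatrix_eq_conj_deltaMatrix_mobius (hAC : Aᵀ * C = Cᵀ * A)
    (hAD : Aᵀ * D - Cᵀ * B = 1) (hBD : Bᵀ * D = Dᵀ * B)
    (hf : DifferentiableOn ℂ f (SiegelHalf g)) (hτ : τ ∈ SiegelHalf g)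
    (hM : IsUnit (C * τ + D).det) (hact : ∀ σ ∈ SiegelHalf g, mobius A B C D σ ∈ SiegelHalf g)
    (hinvf : ∀ σ ∈ SiegelHalf g, f (mobius A B C D σ) = f σ) :
    deltaMatrix f τ =
      (C * τ + D)⁻¹ * deltaMatrix f (mobius A B C D τ) * (C * τ + D)⁻¹ᵀ := by
  set K := (C * τ + D)⁻¹
  have hπ : (Real.pi : ℂ) * I ≠ 0 := by simp [Real.pi_ne_zero]
  refine (deltaMatrix_isSymm f τ).ext_of_trace_mul_eq
    (by simp [IsSymm, transpose_mul, (deltaMatrix_isSymm f _).eq, Matrix.mul_assoc])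
    fun E hE => ?_
  have hKEK : (Kᵀ * E * K).IsSymm := by
    simp [IsSymm, transpose_mul, hE.eq, Matrix.mul_assoc]
  have h := fderivWithin_mobius_transpose_mul_mul hAC hAD hBD hf hτ hM hact hinvf hE
  rw [fderivWithin_eq_trace_deltaMatrix_mul hf (hact τ hτ) hKEK,
    fderivWithin_eq_trace_deltaMatrix_mul hf hτ hE] at h
  rw [← mul_left_cancel₀ hπ h, ← Matrix.mul_assoc, ← Matrix.mul_assoc, trace_mul_comm]
  simp only [Matrix.mul_assoc]

end Siegel

theorem delta_matrix_modular_transform_general (g : ℕ)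
    (A B C D : Matrix (Fin g) (Fin g) ℤ)
    (hsymp : (Matrix.fromBlocks A B C D)ᵀ *
        Matrix.fromBlocks 0 1 (-1) 0 * Matrix.fromBlocks A B C D =
        Matrix.fromBlocks 0 1 (-1) 0)
    (τ : Matrix (Fin g) (Fin g) ℂ) (hτ : τ ∈ SiegelHalf g)
    (hinv : IsUnit ((C.map (Int.cast : ℤ → ℂ)) * τ + D.map (Int.cast : ℤ → ℂ)).det)
    (hact : ∀ σ ∈ SiegelHalf g,
      ((A.map (Int.cast : ℤ → ℂ)) * σ + B.map (Int.cast : ℤ → ℂ)) *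
        ((C.map (Int.cast : ℤ → ℂ)) * σ + D.map (Int.cast : ℤ → ℂ))⁻¹ ∈ SiegelHalf g)
    (f : Matrix (Fin g) (Fin g) ℂ → ℂ)
    (hf : DifferentiableOn ℂ f (SiegelHalf g))
    (hinvf : ∀ σ ∈ SiegelHalf g,
      f (((A.map (Int.cast : ℤ → ℂ)) * σ + B.map (Int.cast : ℤ → ℂ)) *
        ((C.map (Int.cast : ℤ → ℂ)) * σ + D.map (Int.cast : ℤ → ℂ))⁻¹) = f σ) :
    (Matrix.of fun j l => delta j l f
        (((A.map (Int.cast : ℤ → ℂ)) * τ + B.map (Int.cast : ℤ → ℂ)) *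
          ((C.map (Int.cast : ℤ → ℂ)) * τ + D.map (Int.cast : ℤ → ℂ))⁻¹))
      = ((C.map (Int.cast : ℤ → ℂ)) * τ + D.map (Int.cast : ℤ → ℂ)) *
          (Matrix.of fun j l => delta j l f τ) *
          ((C.map (Int.cast : ℤ → ℂ)) * τ + D.map (Int.cast : ℤ → ℂ))ᵀ := by
  have hsympℂ := congrArg (Int.castRingHom ℂ).mapMatrix hsymp
  simp only [map_mul, RingHom.mapMatrix_apply, transpose_map, fromBlocks_map, Matrix.map_zero,
    Matrix.map_one, Matrix.map_neg (fun x : ℤ => (x : ℂ)) Int.cast_neg, Int.coe_castRingHom,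
    Int.cast_zero, Int.cast_one] at hsympℂ
  obtain ⟨hAC, hAD, hBD⟩ := symplectic_block_relations hsympℂ
  set M := C.map (Int.cast : ℤ → ℂ) * τ + D.map (Int.cast : ℤ → ℂ)
  have hΔ := deltaMatrix_eq_conj_deltaMatrix_mobius hAC hAD hBD hf hτ hinv hact hinvf
  change deltaMatrix f (mobius _ _ _ _ τ) = M * deltaMatrix f τ * Mᵀ
  rw [hΔ, ← Matrix.mul_assoc, ← Matrix.mul_assoc, mul_nonsing_inv _ hinv, Matrix.one_mul,
    Matrix.mul_assoc, ← transpose_mul, mul_nonsing_inv _ hinv, transpose_one, Matrix.mul_one]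

/-- the matrix of `δ`-derivatives of a `γ`-invariant holomorphic
function transforms as a `Sym²`-modular tensor. -/
theorem delta_matrix_modular_transform (g : ℕ) (hg : 1 ≤ g)
    (A B C D : Matrix (Fin g) (Fin g) ℤ)
    (hsymp : (Matrix.fromBlocks A B C D)ᵀ *
        Matrix.fromBlocks 0 1 (-1) 0 * Matrix.fromBlocks A B C D =
        Matrix.fromBlocks 0 1 (-1) 0)
    (τ : Matrix (Fin g) (Fin g) ℂ) (hτ : τ ∈ SiegelHalf g)
    (hinv : IsUnit ((C.map (Int.cast : ℤ → ℂ)) * τ + D.map (Int.cast : ℤ → ℂ)).det)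
    (hact : ∀ σ ∈ SiegelHalf g,
      ((A.map (Int.cast : ℤ → ℂ)) * σ + B.map (Int.cast : ℤ → ℂ)) *
        ((C.map (Int.cast : ℤ → ℂ)) * σ + D.map (Int.cast : ℤ → ℂ))⁻¹ ∈ SiegelHalf g)
    (f : Matrix (Fin g) (Fin g) ℂ → ℂ)
    (hf : DifferentiableOn ℂ f (SiegelHalf g))
    (hinvf : ∀ σ ∈ SiegelHalf g,
      f (((A.map (Int.cast : ℤ → ℂ)) * σ + B.map (Int.cast : ℤ → ℂ)) *
        ((C.map (Int.cast : ℤ → ℂ)) * σ + D.map (Int.cast : ℤ → ℂ))⁻¹) = f σ) :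
    (Matrix.of fun j l => delta j l f
        (((A.map (Int.cast : ℤ → ℂ)) * τ + B.map (Int.cast : ℤ → ℂ)) *
          ((C.map (Int.cast : ℤ → ℂ)) * τ + D.map (Int.cast : ℤ → ℂ))⁻¹))
      = ((C.map (Int.cast : ℤ → ℂ)) * τ + D.map (Int.cast : ℤ → ℂ)) *
          (Matrix.of fun j l => delta j l f τ) *
          ((C.map (Int.cast : ℤ → ℂ)) * τ + D.map (Int.cast : ℤ → ℂ))ᵀ :=
  delta_matrix_modular_transform_general g A B C D hsymp τ hτ hinv hact f hf hinvf
end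
end

section
/- For every τ ∈ ℌ₂, the genus-2 thetanulls satisfy the three Riemann relations: θ_{00}(τ)²θ_{01}(τ)² − θ_{02}(τ)²θ_{03}(τ)² = θ_{20}(τ)²θ_{21}(τ)², θ_{00}(τ)²θ_{02}(τ)² − θ_{01}(τ)²θ_{03}(τ)² = θ_{10}(τ)²θ_{12}(τ)², and θ_{00}(τ)²θ_{03}(τ)² − θ_{01}(τ)²θ_{02}(τ)² = θ_{30}(τ)²θ_{33}(τ)². -/
open Complex BigOperators Finset

noncomputable section

/-- The digit encoding of genus-2 half-characteristics:
`0 ↦ (0,0)`, `1 ↦ (0,1)`, `2 ↦ (1,0)`, `3 ↦ (1,1)`. -/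
def digitChar : Fin 4 → (Fin 2 → Fin 2)
  | 0 => ![0, 0]
  | 1 => ![0, 1]
  | 2 => ![1, 0]
  | 3 => ![1, 1]

/-- The genus-2 characteristic denoted by the two digits `x y`. -/
def char2 (x y : Fin 4) : ThetaChar 2 := (digitChar x, digitChar y)

/-- The three derivations `δ₁ = δ_{11}`, `δ₂ = δ_{22}`, `δ₃ = δ_{12}` on `ℌ₂`. -/
def delta3 (j : Fin 3) (f : Matrix (Fin 2) (Fin 2) ℂ → ℂ)
    (τ : Matrix (Fin 2) (Fin 2) ℂ) : ℂ :=
  match j with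
  | 0 => delta (0 : Fin 2) 0 f τ
  | 1 => delta (1 : Fin 2) 1 f τ
  | 2 => delta (0 : Fin 2) 1 f τ

/-- `ψ_{a,j} = δ_j θ_a / θ_a` for `j = 1, 2, 3` in genus 2. -/
def psi3 (a : ThetaChar 2) (j : Fin 3) (τ : Matrix (Fin 2) (Fin 2) ℂ) : ℂ :=
  delta3 j (Thetanull a) τ / Thetanull a τ

/-- An enumeration of the ten even genus-2 characteristics
`𝔎₊ = {00,01,02,03,10,12,20,21,30,33}`. -/
def evenChar2 : Fin 10 → ThetaChar 2 :=
  ![char2 0 0, char2 0 1, char2 0 2, char2 0 3, char2 1 0,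
    char2 1 2, char2 2 0, char2 2 1, char2 3 0, char2 3 3]

/-!
Squaring a thetanull gives a double series over pairs `(n, m)`. Writing `x = n + a′/2`,
`y = m + a′/2` and `Q_τ(x) = xᵀ τ x`, the substitution `u = (x + y)/2`, `w = (x - y)/2` turns
`Q_τ(x) + Q_τ(y)` into `Q_{2τ}(u) + Q_{2τ}(w)`, and sorting the new summation variables by
parity splits the square into products of second-order thetanulls:
`θ_a(τ)² = ∑_ε (-1)^{ε·a″} θ_{(ε,0)}(2τ) θ_{(ε+a′,0)}(2τ)`.
In genus 2 the ten squares `θ_a(τ)²` thus become quadratic forms in the four values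
`θ_{(ε,0)}(2τ)`, and the three Riemann relations are polynomial identities among these.
-/

open Matrix in
theorem Matrix.PosDef.exists_pos_mul_sum_sq_le {n : Type*} [Fintype n] {M : Matrix n n ℝ}
    (hM : M.PosDef) : ∃ c > 0, ∀ x : n → ℝ, c * ∑ i, x i ^ 2 ≤ x ⬝ᵥ M *ᵥ x := by
  let q : (n → ℝ) → ℝ := fun x => x ⬝ᵥ M *ᵥ x
  have hq : Continuous fun v : EuclideanSpace ℝ n => q v.ofLp := by fun_prop
  obtain ⟨c, hc, hcq⟩ := (isCompact_sphere (0 : EuclideanSpace ℝ n) 1).exists_forall_le'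
    hq.continuousOn (a := 0) fun v hv => by
      simpa [q] using hM.dotProduct_mulVec_pos (x := v.ofLp) fun h => by simp_all
  refine ⟨c, hc, fun x => ?_⟩
  rcases eq_or_ne x 0 with rfl | hx
  · simp
  set v : EuclideanSpace ℝ n := WithLp.toLp 2 x
  have hv : 0 < ‖v‖ := norm_pos_iff.mpr (by simpa [v] using hx)
  have h := hcq (‖v‖⁻¹ • v) (by simp [norm_smul, hv.ne'])
  have hsum : ∑ i, x i ^ 2 = ‖v‖ ^ 2 := by simp [v, EuclideanSpace.norm_sq_eq]
  have hhom : q (‖v‖⁻¹ • v).ofLp = (‖v‖ ^ 2)⁻¹ * q x := by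
    simp [q, v, Matrix.mulVec_smul, smul_eq_mul]; ring
  rw [hhom, le_inv_mul_iff₀ (by positivity)] at h
  rw [hsum]
  linarith

theorem summable_pi_prod_of_nonneg {ι κ : Type*} [Fintype ι] {f : ι → κ → ℝ}
    (hf₀ : ∀ i k, 0 ≤ f i k) (hf : ∀ i, Summable (f i)) :
    Summable fun x : ι → κ => ∏ i, f i (x i) := by
  classical
  refine summable_of_sum_le (c := ∏ i, ∑' k, f i k)
    (fun x => Finset.prod_nonneg fun i _ => hf₀ i (x i)) fun S => ?_
  calc ∑ x ∈ S, ∏ i, f i (x i)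
      ≤ ∑ x ∈ Fintype.piFinset fun i => S.image (· i), ∏ i, f i (x i) :=
        Finset.sum_le_sum_of_subset_of_nonneg
          (fun x hx => Fintype.mem_piFinset.mpr fun i => Finset.mem_image_of_mem _ hx)
          fun x _ _ => Finset.prod_nonneg fun i _ => hf₀ i (x i)
    _ = ∏ i, ∑ k ∈ S.image (· i), f i k := (Finset.prod_univ_sum _ _).symm
    _ ≤ ∏ i, ∑' k, f i k :=
        Finset.prod_le_prod (fun i _ => Finset.sum_nonneg fun k _ => hf₀ i k)
          fun i _ => (hf i).sum_le_tsum _ fun k _ => hf₀ i k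

theorem summable_exp_neg_mul_int_add_sq {K : ℝ} (hK : 0 < K) (α : ℝ) :
    Summable fun n : ℤ => Real.exp (-K * (n + α) ^ 2) := by
  have hτ : 0 < (I * (K / Real.pi : ℝ)).im := by simpa using div_pos hK Real.pi_pos
  refine (((summable_jacobiTheta₂_term_iff (I * (K * α / Real.pi : ℝ)) _).mpr hτ).norm.mul_left
    (Real.exp (-K * α ^ 2))).congr fun n => ?_
  rw [norm_jacobiTheta₂_term, ← Real.exp_add]
  congr 1
  simp only [mul_im, I_re, I_im, ofReal_re, ofReal_im]
  field_simp
  ring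

theorem Matrix.sum_sum_parallelogram {ι R : Type*} [Fintype ι] [CommRing R] (τ : Matrix ι ι R)
    (u w : ι → R) :
    ∑ i, ∑ j, (u i + w i) * τ i j * (u j + w j) + ∑ i, ∑ j, (u i - w i) * τ i j * (u j - w j)
      = ∑ i, ∑ j, u i * ((2 : R) • τ) i j * u j + ∑ i, ∑ j, w i * ((2 : R) • τ) i j * w j := by
  simp only [← Finset.sum_add_distrib, Matrix.smul_apply, smul_eq_mul]
  exact Finset.sum_congr rfl fun i _ => Finset.sum_congr rfl fun j _ => by ring

theorem Fin.natCast_val_add_fin_two {R : Type*} [CommRing R] (e α : Fin 2) :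
    (((e + α).val : ℕ) : R) = e.val + α.val - 2 * e.val * α.val := by
  fin_cases e <;> fin_cases α <;> simp; norm_num

theorem Fintype.sum_fin_two_arrow {β M : Type*} [Fintype β] [AddCommMonoid M]
    (f : (Fin 2 → β) → M) : ∑ ε, f ε = ∑ c, ∑ d, f ![c, d] := by
  rw [← (finTwoArrowEquiv β).symm.sum_comp, Fintype.sum_prod_type]
  rfl

/-- The one-coordinate change of variables: `(n, m) = sumDiffCoord α (ε, r, s)` is the solution
of `n + m + α = 2r + ε` and `n - m = 2s + (ε + α mod 2)`. -/
def sumDiffCoord (α : Fin 2) (x : Fin 2 × ℤ × ℤ) : ℤ × ℤ :=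
  (x.2.1 + x.2.2 + x.1.val * (1 - α.val), x.2.1 - x.2.2 + (x.1.val - 1) * α.val)

theorem sumDiffCoord_bijective (α : Fin 2) : Function.Bijective (sumDiffCoord α) := by
  refine ⟨?_, ?_⟩
  · rintro ⟨e, r, s⟩ ⟨e', r', s'⟩ h
    simp only [sumDiffCoord, Prod.mk.injEq] at h ⊢
    fin_cases α <;> fin_cases e <;> fin_cases e' <;> simp at h ⊢ <;> omega
  · rintro ⟨n, m⟩
    obtain ⟨k, hk | hk⟩ := Int.even_or_odd' (n + m + α.val)
    · exact ⟨(0, k, n - k), by simp [sumDiffCoord]; omega⟩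
    · exact ⟨(1, k, n - k - (1 - α.val)), by simp [sumDiffCoord]; omega⟩

section Theta

variable {g : ℕ}

open Matrix

theorem smul_mem_siegelHalf {τ : Matrix (Fin g) (Fin g) ℂ} (hτ : τ ∈ SiegelHalf g) {t : ℝ}
    (ht : 0 < t) : (t : ℂ) • τ ∈ SiegelHalf g := by
  refine ⟨hτ.1.smul _, ?_⟩
  convert hτ.2.smul ht using 1
  ext i j
  simp

theorem norm_thetaTerm_zero {a : ThetaChar g} {τ : Matrix (Fin g) (Fin g) ℂ} {n : Fin g → ℤ}
    {x : Fin g → ℝ} (hx : ∀ i, thetaVec a n i = x i) :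
    ‖thetaTerm a 0 τ n‖ = Real.exp (-Real.pi * (x ⬝ᵥ (of fun i j => (τ i j).im) *ᵥ x)) := by
  rw [thetaTerm, norm_exp]
  congr 1
  simp only [hx, Pi.zero_apply, zero_add, add_re, mul_re, mul_im, I_re, I_im, ofReal_re,
    ofReal_im, re_ofNat, im_ofNat, re_sum, dotProduct, mulVec, of_apply, Finset.mul_sum]
  simp [mul_assoc, mul_left_comm]

theorem summable_norm_thetaTerm {τ : Matrix (Fin g) (Fin g) ℂ} (hτ : τ ∈ SiegelHalf g)
    (a : ThetaChar g) : Summable fun n => ‖thetaTerm a 0 τ n‖ := by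
  obtain ⟨c, hc, hq⟩ := hτ.2.exists_pos_mul_sum_sq_le
  refine (summable_pi_prod_of_nonneg (fun _ _ => (Real.exp_pos _).le) fun i =>
      summable_exp_neg_mul_int_add_sq (mul_pos Real.pi_pos hc) ((a.1 i).val / 2)).of_nonneg_of_le
    (fun _ => norm_nonneg _) fun n => ?_
  rw [norm_thetaTerm_zero (x := fun i => n i + (a.1 i).val / 2) fun i => by simp [thetaVec],
    ← Real.exp_sum, Real.exp_le_exp, ← Finset.mul_sum]
  linarith [mul_le_mul_of_nonneg_left (hq fun i => n i + (a.1 i).val / 2) Real.pi_pos.le]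

def doublingEquiv (a : Fin g → Fin 2) :
    (Fin g → Fin 2) × (Fin g → ℤ) × (Fin g → ℤ) ≃ (Fin g → ℤ) × (Fin g → ℤ) :=
  ((Equiv.arrowProdEquivProdArrow _ _ _).trans
      ((Equiv.refl _).prodCongr (Equiv.arrowProdEquivProdArrow _ _ _))).symm.trans
    ((Equiv.piCongrRight fun i => Equiv.ofBijective _ (sumDiffCoord_bijective (a i))).trans
      (Equiv.arrowProdEquivProdArrow _ _ _))

theorem doublingEquiv_apply (a ε : Fin g → Fin 2) (r s : Fin g → ℤ) :
    doublingEquiv a (ε, r, s) =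
      (fun i => (sumDiffCoord (a i) (ε i, r i, s i)).1,
        fun i => (sumDiffCoord (a i) (ε i, r i, s i)).2) :=
  rfl

theorem thetaVec_doublingEquiv (a : ThetaChar g) (ε : Fin g → Fin 2) (r s : Fin g → ℤ)
    (i : Fin g) :
    thetaVec a (doublingEquiv a.1 (ε, r, s)).1 i =
        thetaVec (ε, 0) r i + thetaVec (ε + a.1, 0) s i ∧
      thetaVec a (doublingEquiv a.1 (ε, r, s)).2 i =
        thetaVec (ε, 0) r i - thetaVec (ε + a.1, 0) s i := by
  simp only [thetaVec, doublingEquiv_apply, sumDiffCoord, Pi.add_apply,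
    Fin.natCast_val_add_fin_two]
  push_cast
  constructor <;> ring

theorem thetaTerm_mul_thetaTerm_doublingEquiv (a : ThetaChar g) (τ : Matrix (Fin g) (Fin g) ℂ)
    (ε : Fin g → Fin 2) (r s : Fin g → ℤ) :
    thetaTerm a 0 τ (doublingEquiv a.1 (ε, r, s)).1 *
        thetaTerm a 0 τ (doublingEquiv a.1 (ε, r, s)).2 =
      (-1) ^ (∑ i, (ε i).val * (a.2 i).val) *
        (thetaTerm (ε, 0) 0 ((2 : ℂ) • τ) r * thetaTerm (ε + a.1, 0) 0 ((2 : ℂ) • τ) s) := by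
  set u := thetaVec (ε, 0) r
  set w := thetaVec (ε + a.1, 0) s
  have hx : thetaVec a (doublingEquiv a.1 (ε, r, s)).1 = u + w :=
    funext fun i => (thetaVec_doublingEquiv a ε r s i).1
  have hy : thetaVec a (doublingEquiv a.1 (ε, r, s)).2 = u - w :=
    funext fun i => (thetaVec_doublingEquiv a ε r s i).2
  have hlin : ∑ i, (u i + w i) * (0 + ((a.2 i).val : ℂ) / 2)
      + ∑ i, (u i - w i) * (0 + ((a.2 i).val : ℂ) / 2)
      = ((∑ i, r i * (a.2 i).val : ℤ) : ℂ) + ((∑ i, (ε i).val * (a.2 i).val : ℕ) : ℂ) / 2 := by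
    push_cast
    simp only [u, thetaVec, Finset.sum_div, ← Finset.sum_add_distrib]
    exact Finset.sum_congr rfl fun i _ => by simp; ring
  have hsign : (-1 : ℂ) ^ (∑ i, (ε i).val * (a.2 i).val)
      = exp ((∑ i, (ε i).val * (a.2 i).val : ℕ) * (Real.pi * I)) := by
    rw [exp_nat_mul, exp_pi_mul_I]
  rw [thetaTerm, thetaTerm, thetaTerm, thetaTerm, hx, hy, hsign, ← exp_add, ← exp_add,
    ← exp_add, exp_eq_exp_iff_exists_int]
  refine ⟨∑ i, r i * (a.2 i).val, ?_⟩
  simp only [Pi.add_apply, Pi.sub_apply, Pi.zero_apply, Fin.val_zero, CharP.cast_eq_zero,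
    zero_div, add_zero, mul_zero, Finset.sum_const_zero]
  linear_combination (Real.pi * I) * sum_sum_parallelogram τ u w + (2 * Real.pi * I) * hlin

theorem thetanull_sq_eq_sum {τ : Matrix (Fin g) (Fin g) ℂ} (hτ : τ ∈ SiegelHalf g)
    (a : ThetaChar g) :
    Thetanull a τ ^ 2 = ∑ ε : Fin g → Fin 2, (-1) ^ (∑ i, (ε i).val * (a.2 i).val) *
      (Thetanull (ε, 0) ((2 : ℂ) • τ) * Thetanull (ε + a.1, 0) ((2 : ℂ) • τ)) := by
  have h2τ : (2 : ℂ) • τ ∈ SiegelHalf g := by simpa using smul_mem_siegelHalf hτ two_pos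
  have hs := summable_norm_thetaTerm hτ a
  have hs₂ b := summable_norm_thetaTerm h2τ b
  set e := doublingEquiv a.1
  let f : (Fin g → Fin 2) × (Fin g → ℤ) × (Fin g → ℤ) → ℂ := fun x =>
    (-1) ^ (∑ i, (x.1 i).val * (a.2 i).val) *
      (thetaTerm (x.1, 0) 0 ((2 : ℂ) • τ) x.2.1 * thetaTerm (x.1 + a.1, 0) 0 ((2 : ℂ) • τ) x.2.2)
  have hf x : thetaTerm a 0 τ (e x).1 * thetaTerm a 0 τ (e x).2 = f x :=
    thetaTerm_mul_thetaTerm_doublingEquiv a τ x.1 x.2.1 x.2.2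
  have hf_summable : Summable f := (e.summable_iff.mpr (hs.mul_norm hs).of_norm).congr hf
  calc Thetanull a τ ^ 2
      = ∑' p : (Fin g → ℤ) × (Fin g → ℤ), thetaTerm a 0 τ p.1 * thetaTerm a 0 τ p.2 := by
        rw [Thetanull, Theta, sq, tsum_mul_tsum_of_summable_norm hs hs]
    _ = ∑' x, f x := by rw [← e.tsum_eq]; exact tsum_congr hf
    _ = _ := by
        rw [hf_summable.tsum_prod, tsum_fintype]
        refine Finset.sum_congr rfl fun ε _ => ?_
        simp only [f]
        rw [tsum_mul_left, Thetanull, Thetanull, Theta, Theta,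
          tsum_mul_tsum_of_summable_norm (hs₂ _) (hs₂ _)]

end Theta

/-- the three quadratic Riemann relations among the genus-2
thetanulls. -/
theorem genus2_riemann_relations_squares (τ : Matrix (Fin 2) (Fin 2) ℂ)
    (hτ : τ ∈ SiegelHalf 2) :
    Thetanull (char2 0 0) τ ^ 2 * Thetanull (char2 0 1) τ ^ 2
        - Thetanull (char2 0 2) τ ^ 2 * Thetanull (char2 0 3) τ ^ 2
      = Thetanull (char2 2 0) τ ^ 2 * Thetanull (char2 2 1) τ ^ 2 ∧
    Thetanull (char2 0 0) τ ^ 2 * Thetanull (char2 0 2) τ ^ 2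
        - Thetanull (char2 0 1) τ ^ 2 * Thetanull (char2 0 3) τ ^ 2
      = Thetanull (char2 1 0) τ ^ 2 * Thetanull (char2 1 2) τ ^ 2 ∧
    Thetanull (char2 0 0) τ ^ 2 * Thetanull (char2 0 3) τ ^ 2
        - Thetanull (char2 0 1) τ ^ 2 * Thetanull (char2 0 2) τ ^ 2
      = Thetanull (char2 3 0) τ ^ 2 * Thetanull (char2 3 3) τ ^ 2 := by
  simp only [thetanull_sq_eq_sum hτ, Fintype.sum_fin_two_arrow, Fin.sum_univ_two, char2,
    digitChar, Matrix.cons_add_cons, Matrix.empty_add_empty, Fin.reduceAdd]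
  norm_num
  refine ⟨by ring, by ring, by ring⟩
end
end
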